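/- arXiv:2003.03870 — 6 statements merged into one kernel-verified Lean document; each statement's English description precedes it below -/
import Mathlib

section
/- For positive integers k and m with 2^(m + ν₂(k)) > k, the smallest positive integer n such that 2^m divides the binomial coefficient C(n,k) is n = 2^(m + ν₂(k)), where ν₂ denotes the 2-adic valuation. -/
/-!
By Kummer's theorem, `ν_p C(n, k)` is the number of carries when `k` and `n - k` are added in
base `p`. No carry occurs in the lowest `ν_p k` positions, where the digits of `k` vanish, nor
above position `log_p n`; hence `p ^ m ∣ C(n, k)` forces `m + ν_p k ≤ log_p n`, that is
`p ^ (m + ν_p k) ≤ n`. Conversely `ν_p C(p ^ N, k) = N - ν_p k` for `0 < k ≤ p ^ N`, so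
`n = p ^ (m + ν_p k)` attains the bound.
-/

open Finset

namespace Nat

variable {p : ℕ} [hp : Fact p.Prime]

theorem padicValNat_lt_of_pow_le_mod_add_mod {k l i : ℕ} (hi : p ^ i ≤ k % p ^ i + l % p ^ i) :
    padicValNat p k < i := by
  by_contra! hik
  have hk : k % p ^ i = 0 := mod_eq_zero_of_dvd ((pow_dvd_pow p hik).trans pow_padicValNat_dvd)
  rw [hk, zero_add] at hi
  exact hi.not_gt (mod_lt _ (pow_pos hp.out.pos i))

theorem le_log_of_pow_le_mod_add_mod {n k i : ℕ} (hkn : k ≤ n)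
    (hi : p ^ i ≤ k % p ^ i + (n - k) % p ^ i) : i ≤ log p n := by
  refine le_log_of_pow_le hp.out.one_lt ?_
  calc p ^ i ≤ k % p ^ i + (n - k) % p ^ i := hi
    _ ≤ k + (n - k) := add_le_add (mod_le _ _) (mod_le _ _)
    _ = n := add_sub_of_le hkn

theorem padicValNat_choose_le_log_sub {n k : ℕ} (hkn : k ≤ n) :
    padicValNat p (n.choose k) ≤ log p n - padicValNat p k := by
  rw [padicValNat_choose hkn (lt_succ_self _)]
  refine (card_le_card fun i hi ↦ ?_).trans (card_Ioc _ _).le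
  have hcarry := (mem_filter.mp hi).2
  exact mem_Ioc.mpr ⟨padicValNat_lt_of_pow_le_mod_add_mod hcarry,
    le_log_of_pow_le_mod_add_mod hkn hcarry⟩

theorem pow_add_padicValNat_le_of_pow_dvd_choose {n k m : ℕ} (hk : k ≠ 0) (hkn : k ≤ n)
    (hdvd : p ^ m ∣ n.choose k) : p ^ (m + padicValNat p k) ≤ n := by
  have hm : m ≤ log p n - padicValNat p k :=
    ((padicValNat_dvd_iff_le (choose_ne_zero hkn)).mp hdvd).trans
      (padicValNat_choose_le_log_sub hkn)
  have hv : padicValNat p k ≤ log p n :=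
    le_log_of_pow_le hp.out.one_lt ((le_of_dvd (pos_of_ne_zero hk) pow_padicValNat_dvd).trans hkn)
  exact pow_le_of_le_log (by omega) (by omega)

theorem pow_dvd_choose_pow_add_padicValNat {k m : ℕ} (hk : k ≠ 0)
    (hkm : k ≤ p ^ (m + padicValNat p k)) : p ^ m ∣ (p ^ (m + padicValNat p k)).choose k := by
  rw [padicValNat_dvd_iff_le (choose_ne_zero hkm), ← factorization_def _ hp.out,
    factorization_choose_prime_pow hp.out hkm hk, factorization_def _ hp.out, add_tsub_cancel_right]

end Nat

theorem stmt0_general (k m : ℕ) (hk : 0 < k)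
    (h : k < 2 ^ (m + padicValNat 2 k)) :
    IsLeast {n : ℕ | k ≤ n ∧ 2 ^ m ∣ n.choose k} (2 ^ (m + padicValNat 2 k)) :=
  ⟨⟨h.le, Nat.pow_dvd_choose_pow_add_padicValNat hk.ne' h.le⟩,
    fun _ ⟨hkn, hdvd⟩ ↦ Nat.pow_add_padicValNat_le_of_pow_dvd_choose hk.ne' hkn hdvd⟩

/-- For positive integers `k` and `m` with `2 ^ (m + ν₂ k) > k`, the smallest integer
`n ≥ k` such that `2 ^ m` divides `C(n, k)` is `n = 2 ^ (m + ν₂ k)`. -/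
theorem stmt0 (k m : ℕ) (hk : 0 < k) (hm : 0 < m)
    (h : k < 2 ^ (m + padicValNat 2 k)) :
    IsLeast {n : ℕ | k ≤ n ∧ 2 ^ m ∣ n.choose k} (2 ^ (m + padicValNat 2 k)) :=
  stmt0_general k m hk h
end

section
/- The number of carries when adding n-k and k in base 2 (equivalently, ν₂(C(n,k))) is strictly less than d - ν₂(k), where d is the number of binary digits of n and k ≤ n. -/
/-- The number of carries when adding `n - k` and `k` in base 2, i.e. `ν₂ (C(n,k))`,
is strictly less than `d - ν₂ k`, where `d` is the number of binary digits of `n`. -/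
theorem stmt2 (n k : ℕ) (hk : 0 < k) (hkn : k ≤ n) :
    (padicValNat 2 (n.choose k) : ℤ) <
      ((Nat.digits 2 n).length : ℤ) - padicValNat 2 k := by
  have hn : n ≠ 0 := by omega
  have hd : (Nat.digits 2 n).length = Nat.log 2 n + 1 :=
    Nat.digits_len 2 n (by norm_num) hn
  have hνk : padicValNat 2 k ≤ Nat.log 2 n :=
    le_trans (padicValNat_le_nat_log k) (Nat.log_mono_right hkn)
  haveI : Fact (Nat.Prime 2) := ⟨Nat.prime_two⟩
  have hkum := padicValNat_choose (p := 2) hkn (Nat.lt_succ_self (Nat.log 2 n))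
  have hsub : {i ∈ Finset.Ico 1 (Nat.log 2 n + 1) |
      2 ^ i ≤ k % 2 ^ i + (n - k) % 2 ^ i} ⊆
      Finset.Ico (padicValNat 2 k + 1) (Nat.log 2 n + 1) := by
    intro i hi
    simp only [Finset.mem_filter, Finset.mem_Ico] at hi ⊢
    obtain ⟨⟨h1, h2⟩, h3⟩ := hi
    refine ⟨?_, h2⟩
    by_contra h
    push_neg at h
    have hdvd : 2 ^ i ∣ k :=
      dvd_trans (pow_dvd_pow 2 (by omega : i ≤ padicValNat 2 k)) pow_padicValNat_dvd
    have hk0 : k % 2 ^ i = 0 := Nat.mod_eq_zero_of_dvd hdvd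
    have := Nat.mod_lt (n - k) (show 0 < 2 ^ i by positivity)
    omega
  have hcard : padicValNat 2 (n.choose k) ≤ Nat.log 2 n - padicValNat 2 k := by
    rw [hkum]
    calc _ ≤ (Finset.Ico (padicValNat 2 k + 1) (Nat.log 2 n + 1)).card :=
          Finset.card_le_card hsub
      _ = Nat.log 2 n - padicValNat 2 k := by rw [Nat.card_Ico]; omega
  have h1 : padicValNat 2 (n.choose k) + padicValNat 2 k ≤ Nat.log 2 n := by omega
  have h2 : (padicValNat 2 (n.choose k) : ℤ) + padicValNat 2 k ≤ Nat.log 2 n := by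
    exact_mod_cast h1
  have h3 : ((Nat.log 2 n + 1 : ℕ) : ℤ) = (Nat.log 2 n : ℤ) + 1 := by push_cast; ring
  rw [hd, h3]
  omega
end

section
/- For a positive integer n, 8 divides C(n,3) and 2 divides C(n,2) if and only if n ≡ 0, 1, or 8 (mod 16). -/
lemma aux48 : ∀ r < 48, ((48 ∣ (r+3)*(r+2)*(r+1) ∧ 4 ∣ (r+3)*(r+2)) ↔
    ((r+3) % 16 = 0 ∨ (r+3) % 16 = 1 ∨ (r+3) % 16 = 8)) := by decide

/-- For a positive integer `n`, `8 ∣ C(n,3)` and `2 ∣ C(n,2)` if and only if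
`n ≡ 0, 1, 8 (mod 16)`. -/
theorem stmt4 (n : ℕ) (hn : 0 < n) :
    (8 ∣ n.choose 3 ∧ 2 ∣ n.choose 2) ↔ (n % 16 = 0 ∨ n % 16 = 1 ∨ n % 16 = 8) := by
  match n, hn with
  | 1, _ => decide
  | 2, _ => decide
  | (k+3), _ =>
    have h3 : (k+3).descFactorial 3 = 6 * (k+3).choose 3 :=
      Nat.descFactorial_eq_factorial_mul_choose _ _
    have h2 : (k+3).descFactorial 2 = 2 * (k+3).choose 2 :=
      Nat.descFactorial_eq_factorial_mul_choose _ _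
    have hd3 : (k+3).descFactorial 3 = (k+3)*(k+2)*(k+1) := by
      simp [Nat.descFactorial]; ring
    have hd2 : (k+3).descFactorial 2 = (k+3)*(k+2) := by
      simp [Nat.descFactorial]; ring
    set r := k % 48 with hr
    have hrlt : r < 48 := Nat.mod_lt _ (by norm_num)
    have hmod : k ≡ r [MOD 48] := (Nat.mod_modEq k 48).symm
    have hm3 : (k+3)*(k+2)*(k+1) ≡ (r+3)*(r+2)*(r+1) [MOD 48] :=
      ((hmod.add_right 3).mul (hmod.add_right 2)).mul (hmod.add_right 1)
    have hm2 : (k+3)*(k+2) ≡ (r+3)*(r+2) [MOD 4] := by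
      have := hmod.of_dvd (by norm_num : (4:ℕ) ∣ 48)
      exact (this.add_right 3).mul (this.add_right 2)
    have e3 : 8 ∣ (k+3).choose 3 ↔ 48 ∣ (r+3)*(r+2)*(r+1) := by
      rw [← Nat.mul_dvd_mul_iff_left (show 0 < 6 by norm_num), ← h3,
        show 6*8 = 48 from rfl, hd3]
      constructor
      · intro h; exact (Nat.modEq_zero_iff_dvd).1 (((Nat.modEq_zero_iff_dvd).2 h).symm.trans hm3).symm
      · intro h; exact (Nat.modEq_zero_iff_dvd).1 (hm3.trans ((Nat.modEq_zero_iff_dvd).2 h))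
    have e2 : 2 ∣ (k+3).choose 2 ↔ 4 ∣ (r+3)*(r+2) := by
      rw [← Nat.mul_dvd_mul_iff_left (show 0 < 2 by norm_num), ← h2,
        show 2*2 = 4 from rfl, hd2]
      constructor
      · intro h; exact (Nat.modEq_zero_iff_dvd).1 (((Nat.modEq_zero_iff_dvd).2 h).symm.trans hm2).symm
      · intro h; exact (Nat.modEq_zero_iff_dvd).1 (hm2.trans ((Nat.modEq_zero_iff_dvd).2 h))
    rw [e3, e2, aux48 r hrlt]
    omega
end

section
/- If a finite simple graph G on n ≥ k vertices is k-symmetric (for k ≥ 2), then G is (k-1)-symmetric. -/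
/-- The number of `k`-element vertex subsets of `G` whose induced subgraph is
isomorphic to `H`. -/
noncomputable def symCount {V : Type*} [Fintype V] (G : SimpleGraph V) {k : ℕ}
    (H : SimpleGraph (Fin k)) : ℕ :=
  Nat.card {s : Finset V // s.card = k ∧ Nonempty (G.induce (s : Set V) ≃g H)}

/-- `G` is `k`-symmetric: for every graph `H` on `k` vertices, the density of `H`
as an induced subgraph of `G` equals `(k! / |Aut H|) / 2 ^ C(k,2)`, the probability
that the random graph `G(k, 1/2)` is isomorphic to `H`.  Stated multiplicatively:
`symCount G H * |Aut H| * 2 ^ C(k,2) = C(n,k) * k!`. -/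
def IsKSym {V : Type*} [Fintype V] (G : SimpleGraph V) (k : ℕ) : Prop :=
  ∀ H : SimpleGraph (Fin k),
    symCount G H * Nat.card (H ≃g H) * 2 ^ (k.choose 2) =
      (Fintype.card V).choose k * k.factorial

/-! Write `emb H` for the number of induced embeddings of `H` into `G`; it is
`symCount G H * |Aut H|`, so `k`-symmetry says `emb H * 2 ^ C(k,2) = n (n-1) ⋯ (n-k+1)` for every
`H` on `k` vertices. An embedding of a graph `H` on `m` vertices together with one of the `n - m`
vertices outside its image is the same as an embedding of one of the `2 ^ m` graphs obtained from
`H` by adding a vertex. Summing the `(m+1)`-symmetry identity over these `2 ^ m` graphs and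
dividing by `2 ^ m (n - m)` gives `m`-symmetry. -/

open Finset

namespace SimpleGraph

variable {V W W' : Type*} {G : SimpleGraph V} {H : SimpleGraph W} {H' : SimpleGraph W'}

lemma Iso.card_iso_eq_card_aut (e : H ≃g H') : Nat.card (H ≃g H') = Nat.card (H ≃g H) :=
  Nat.card_congr (RelIso.relIsoCongr (RelIso.refl _) e).symm

lemma Iso.card_embedding_eq (e : H ≃g H') : Nat.card (H ↪g G) = Nat.card (H' ↪g G) :=
  Nat.card_congr (RelIso.relEmbeddingCongr e (RelIso.refl _))

noncomputable def Embedding.rangeEqEquivIso (s : Set V) :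
    {f : H ↪g G // Set.range f = s} ≃ (H ≃g G.induce s) where
  toFun f :=
    { toEquiv := (Equiv.ofInjective f f.1.injective).trans (Equiv.setCongr f.2)
      map_rel_iff' := by simp }
  invFun e := ⟨(Embedding.induce s).comp e.toEmbedding, by ext; simp⟩
  left_inv f := by ext; rfl
  right_inv e := by ext; rfl

lemma card_embedding_eq_sum_card_iso_induce [Fintype V] [Fintype W] :
    Nat.card (H ↪g G) = ∑ s : Finset V, Nat.card (H ≃g G.induce (s : Set V)) := by
  classical
  calc Nat.card (H ↪g G)
      = Nat.card (Σ s : Finset V, {f : H ↪g G // (Set.range f).toFinset = s}) :=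
        (Nat.card_congr (Equiv.sigmaFiberEquiv _)).symm
    _ = ∑ s : Finset V, Nat.card (H ≃g G.induce (s : Set V)) := by
        rw [Nat.card_sigma]
        refine sum_congr rfl fun s _ => Nat.card_congr ?_
        exact (Equiv.subtypeEquivRight fun f => by rw [← coe_inj, Set.coe_toFinset]).trans
          (Embedding.rangeEqEquivIso _)

end SimpleGraph

lemma symCount_mul_card_aut {V : Type*} [Fintype V] (G : SimpleGraph V) {k : ℕ}
    (H : SimpleGraph (Fin k)) : symCount G H * Nat.card (H ≃g H) = Nat.card (H ↪g G) := by
  classical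
  have hfiber (s : Finset V) : Nat.card (H ≃g G.induce (s : Set V)) =
      if s.card = k ∧ Nonempty (G.induce (s : Set V) ≃g H) then Nat.card (H ≃g H) else 0 := by
    by_cases hs : Nonempty (G.induce (s : Set V) ≃g H)
    · obtain ⟨e⟩ := hs
      have hcard : s.card = k := by simpa using Fintype.card_congr e.toEquiv
      rw [if_pos ⟨hcard, ⟨e⟩⟩, e.symm.card_iso_eq_card_aut]
    · have : IsEmpty (H ≃g G.induce (s : Set V)) := ⟨fun e => hs ⟨e.symm⟩⟩
      rw [if_neg fun h => hs h.2, Nat.card_of_isEmpty]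
  rw [SimpleGraph.card_embedding_eq_sum_card_iso_induce, sum_congr rfl fun s _ => hfiber s,
    sum_ite, sum_const_zero, add_zero, sum_const, smul_eq_mul, symCount,
    Nat.card_eq_fintype_card, Fintype.card_subtype]

lemma isKSym_iff_card_embedding {V : Type*} [Fintype V] {G : SimpleGraph V} {k : ℕ} :
    IsKSym G k ↔ ∀ H : SimpleGraph (Fin k),
      Nat.card (H ↪g G) * 2 ^ k.choose 2 = (Fintype.card V).descFactorial k := by
  simp only [IsKSym, symCount_mul_card_aut, Nat.descFactorial_eq_factorial_mul_choose, mul_comm]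

namespace SimpleGraph

variable {V W : Type*} {G : SimpleGraph V}

def addVertex (H : SimpleGraph W) (N : Set W) : SimpleGraph (Option W) where
  Adj x y := match x, y with
    | some i, some j => H.Adj i j
    | some i, none | none, some i => i ∈ N
    | none, none => False
  symm := ⟨by rintro (_ | i) (_ | j) h <;> simp_all [H.adj_comm]⟩
  loopless := ⟨by rintro (_ | i) h <;> simp_all⟩

variable {H : SimpleGraph W} {N : Set W}

@[simp] lemma addVertex_adj_some_some {i j : W} :
    (H.addVertex N).Adj (some i) (some j) ↔ H.Adj i j := .rfl

@[simp] lemma addVertex_adj_some_none {i : W} : (H.addVertex N).Adj (some i) none ↔ i ∈ N := .rfl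

@[simp] lemma addVertex_adj_none_some {i : W} : (H.addVertex N).Adj none (some i) ↔ i ∈ N := .rfl

def embeddingAddVertex (H : SimpleGraph W) (N : Set W) : H ↪g H.addVertex N :=
  ⟨Function.Embedding.some, .rfl⟩

def Embedding.addVertex (f : H ↪g G) (v : V) (hv : v ∉ Set.range f) :
    H.addVertex {i | G.Adj (f i) v} ↪g G where
  toEmbedding := f.toEmbedding.optionElim v hv
  map_rel_iff' := by rintro (_ | i) (_ | j) <;> simp [G.adj_comm]

lemma sigma_addVertex_ext {N₁ N₂ : Set W} {g₁ : H.addVertex N₁ ↪g G} {g₂ : H.addVertex N₂ ↪g G}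
    (hN : N₁ = N₂) (hg : ∀ x, g₁ x = g₂ x) :
    (⟨N₁, g₁⟩ : Σ N, H.addVertex N ↪g G) = ⟨N₂, g₂⟩ := by
  subst hN
  rw [RelEmbedding.ext hg]

def sigmaAddVertexEmbeddingEquiv :
    (Σ N : Set W, H.addVertex N ↪g G) ≃ Σ f : H ↪g G, ↥(Set.range f)ᶜ where
  toFun g := ⟨(embeddingAddVertex H g.1).trans g.2, g.2 none,
    fun ⟨i, hi⟩ => Option.some_ne_none i (g.2.injective hi)⟩
  invFun p := ⟨_, p.1.addVertex p.2 p.2.2⟩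
  left_inv := by
    rintro ⟨N, g⟩
    refine sigma_addVertex_ext (Set.ext fun i => g.map_adj_iff) ?_
    rintro (_ | i) <;> rfl
  right_inv := by
    rintro ⟨f, v, hv⟩
    exact Sigma.subtype_ext (RelEmbedding.ext fun i => rfl) rfl

lemma sum_card_addVertex_embedding [Fintype V] [Fintype W] :
    ∑ N : Set W, Nat.card (H.addVertex N ↪g G) =
      Nat.card (H ↪g G) * (Fintype.card V - Fintype.card W) := by
  classical
  rw [← Nat.card_sigma, Nat.card_congr sigmaAddVertexEmbeddingEquiv, Nat.card_sigma]
  simp_rw [Nat.card_eq_fintype_card, Fintype.card_compl_set, Fintype.card_range, sum_const,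
    card_univ, smul_eq_mul]

end SimpleGraph

open SimpleGraph in
lemma IsKSym.of_succ {V : Type*} [Fintype V] {G : SimpleGraph V} {m : ℕ}
    (hm : m < Fintype.card V) (h : IsKSym G (m + 1)) : IsKSym G m := by
  rw [isKSym_iff_card_embedding] at h ⊢
  intro H
  set n := Fintype.card V
  have hext (N : Set (Fin m)) :
      Nat.card (H.addVertex N ↪g G) * 2 ^ (m + 1).choose 2 = n.descFactorial (m + 1) := by
    rw [(Iso.map finSuccEquivLast.symm _).card_embedding_eq]
    exact h _
  have hpos : 0 < 2 ^ m * (n - m) := Nat.mul_pos (by positivity) (Nat.sub_pos_of_lt hm)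
  refine Nat.eq_of_mul_eq_mul_right hpos ?_
  calc Nat.card (H ↪g G) * 2 ^ m.choose 2 * (2 ^ m * (n - m))
      = (∑ N : Set (Fin m), Nat.card (H.addVertex N ↪g G)) * 2 ^ (m + 1).choose 2 := by
        rw [sum_card_addVertex_embedding, Fintype.card_fin, Nat.choose_succ_succ,
          Nat.choose_one_right, pow_add]
        ring
    _ = 2 ^ m * n.descFactorial (m + 1) := by
        simp_rw [sum_mul, hext, sum_const, card_univ, Fintype.card_set, Fintype.card_fin,
          smul_eq_mul]
    _ = n.descFactorial m * (2 ^ m * (n - m)) := by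
        rw [Nat.descFactorial_succ]
        ring

theorem stmt7_general {V : Type*} [Fintype V] (G : SimpleGraph V) (k : ℕ)
    (hn : k ≤ Fintype.card V) (h : IsKSym G k) : IsKSym G (k - 1) := by
  cases k with
  | zero => exact h
  | succ m => exact h.of_succ hn

/-- A `k`-symmetric graph on `n ≥ k` vertices (`k ≥ 2`) is `(k-1)`-symmetric. -/
theorem stmt7 {V : Type*} [Fintype V] (G : SimpleGraph V) (k : ℕ) (hk : 2 ≤ k)
    (hn : k ≤ Fintype.card V) (h : IsKSym G k) : IsKSym G (k - 1) :=
  stmt7_general G k hn h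
end

section
/- For finite simple graphs G and H, the number of triangles in inflate(G,H) equals |G|·T(H) + 2·e(G)·e(H)·|H| + T(G)·|H|³, where T denotes the number of triangles (3-cliques) and e the number of edges. -/
open scoped Classical

/-- The inflation (lexicographic product) of `G` with `H`: vertex set `α × β`,
with `(g₁,h₁) ~ (g₂,h₂)` iff `g₁ ~ g₂` in `G`, or `g₁ = g₂` and `h₁ ~ h₂` in `H`. -/
def inflate {α β : Type*} (G : SimpleGraph α) (H : SimpleGraph β) :
    SimpleGraph (α × β) where
  Adj p q := G.Adj p.1 q.1 ∨ (p.1 = q.1 ∧ H.Adj p.2 q.2)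
  symm := by
    constructor
    rintro p q (h | ⟨h1, h2⟩)
    · exact Or.inl h.symm
    · exact Or.inr ⟨h1.symm, h2.symm⟩
  loopless := by
    constructor
    rintro p (h | ⟨-, h⟩)
    · exact G.irrefl h
    · exact H.irrefl h

/-- The number of edges of a graph. -/
noncomputable def edgeCount {V : Type*} (G : SimpleGraph V) : ℕ :=
  Nat.card G.edgeSet

/-- Twice the number of edges of `G` inside the vertex subset `s`
(counting ordered adjacent pairs). -/
noncomputable def edgePairsIn {V : Type*} [Fintype V] (G : SimpleGraph V)
    (s : Finset V) : ℕ :=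
  ((s ×ˢ s).filter fun p => G.Adj p.1 p.2).card

/-- The number of 3-element vertex subsets of `G` whose induced subgraph has
exactly `j` edges. -/
noncomputable def tripleCount {V : Type*} [Fintype V] (G : SimpleGraph V) (j : ℕ) : ℕ :=
  ((Finset.powersetCard 3 (Finset.univ : Finset V)).filter
    fun s => edgePairsIn G s = 2 * j).card

/-!
Count ordered triangles, of which every triangle yields six. An ordered triangle
`((a, x), (b, y), (c, z))` of `inflate G H` is of exactly one of five kinds, according to which
of `a, b, c` coincide: `a = b = c` and `(x, y, z)` is a triangle of `H`; exactly two coincide,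
say `a = b`, and then `a ~ c` in `G`, `x ~ y` in `H` and `z` is arbitrary (three patterns); or
`(a, b, c)` is a triangle of `G` and `x, y, z` are arbitrary.
-/

open Finset SimpleGraph

section Counting

variable {V : Type*}

lemma card_filter_pairwise_ne_triple (s : Finset V) :
    #{t ∈ s ×ˢ s ×ˢ s | t.1 ≠ t.2.1 ∧ t.1 ≠ t.2.2 ∧ t.2.1 ≠ t.2.2} =
      #s * (#s - 1) * (#s - 2) := by
  set D := {t ∈ s ×ˢ s ×ˢ s | t.1 ≠ t.2.1 ∧ t.1 ≠ t.2.2 ∧ t.2.1 ≠ t.2.2}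
  have hD : ∀ t ∈ D, (t.1, t.2.1) ∈ s.offDiag := by
    intro t ht
    simp only [D, mem_filter, mem_product] at ht
    exact mem_offDiag.2 ⟨ht.1.1, ht.1.2.1, ht.2.1⟩
  have fiber : ∀ p ∈ s.offDiag, #{t ∈ D | (t.1, t.2.1) = p} = #s - 2 := by
    rintro ⟨x, y⟩ hxy
    obtain ⟨hx, hy, hne⟩ := mem_offDiag.1 hxy
    rw [show #s - 2 = #s - 1 - 1 by omega, ← card_erase_of_mem hx,
      ← card_erase_of_mem (mem_erase.2 ⟨hne.symm, hy⟩)]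
    refine card_nbij' (·.2.2) (fun z => (x, y, z)) ?_ ?_ ?_ ?_
    · rintro ⟨a, b, c⟩ h
      simp only [D, mem_coe, mem_filter, mem_product, Prod.mk.injEq] at h
      obtain ⟨⟨⟨-, -, hc⟩, -, hac, hbc⟩, rfl, rfl⟩ := h
      simp [hc, hac.symm, hbc.symm]
    · intro z hz
      simp only [mem_coe, mem_erase] at hz
      simp [D, hx, hy, hne, hz.1.symm, hz.2.1.symm, hz.2.2]
    · rintro ⟨a, b, c⟩ h
      simp only [D, mem_coe, mem_filter, Prod.mk.injEq] at h
      obtain ⟨-, rfl, rfl⟩ := h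
      rfl
    · intro z _
      rfl
  rw [card_eq_sum_card_fiberwise hD, sum_congr rfl fiber, sum_const, offDiag_card, smul_eq_mul,
    ← Nat.mul_sub_one]

variable [Fintype V] (G : SimpleGraph V)

noncomputable def orderedTriangles : Finset (V × V × V) :=
  {t | G.Adj t.1 t.2.1 ∧ G.Adj t.1 t.2.2 ∧ G.Adj t.2.1 t.2.2}

noncomputable def adjPairs : Finset (V × V) := {p | G.Adj p.1 p.2}

variable {G}

@[simp] lemma mem_orderedTriangles {t : V × V × V} :
    t ∈ orderedTriangles G ↔ G.Adj t.1 t.2.1 ∧ G.Adj t.1 t.2.2 ∧ G.Adj t.2.1 t.2.2 := by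
  simp [orderedTriangles]

@[simp] lemma mem_adjPairs {p : V × V} : p ∈ adjPairs G ↔ G.Adj p.1 p.2 := by
  simp [adjPairs]

lemma card_adjPairs : #(adjPairs G) = 2 * edgeCount G := by
  rw [edgeCount, Nat.card_eq_fintype_card, ← edgeFinset_card, ← dart_card_eq_twice_card_edges,
    ← card_univ]
  symm
  exact card_bij (fun d _ => d.toProd) (fun d _ => mem_adjPairs.2 d.adj)
    (fun d _ d' _ => Dart.ext d d') fun p hp => ⟨⟨p, mem_adjPairs.1 hp⟩, mem_univ _, rfl⟩

lemma edgePairsIn_eq_card_offDiag_iff (s : Finset V) :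
    edgePairsIn G s = #s.offDiag ↔ G.IsClique (s : Set V) := by
  have : {p ∈ s ×ˢ s | G.Adj p.1 p.2} = {p ∈ s.offDiag | G.Adj p.1 p.2} := by
    ext ⟨a, b⟩
    simp only [mem_filter, mem_product, mem_offDiag]
    exact ⟨fun h => ⟨⟨h.1.1, h.1.2, h.2.ne⟩, h.2⟩, fun h => ⟨⟨h.1.1, h.1.2.1⟩, h.2⟩⟩
  rw [edgePairsIn, this, card_filter_eq_iff, IsClique, Set.Pairwise]
  simp only [mem_offDiag, mem_coe, Prod.forall, and_imp]
  exact ⟨fun h a ha b hb => h a b ha hb, fun h a b ha hb => h ha hb⟩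

lemma tripleCount_three_eq_card_cliqueFinset : tripleCount G 3 = #(G.cliqueFinset 3) := by
  unfold tripleCount cliqueFinset
  congr 1
  ext s
  simp only [mem_filter, mem_powersetCard_univ, mem_univ, true_and, isNClique_iff]
  rw [and_comm]
  refine and_congr_left fun hs => ?_
  rw [← edgePairsIn_eq_card_offDiag_iff, offDiag_card, hs]

lemma card_orderedTriangles : #(orderedTriangles G) = 6 * #(G.cliqueFinset 3) := by
  have hmaps : ∀ t ∈ orderedTriangles G, {t.1, t.2.1, t.2.2} ∈ G.cliqueFinset 3 := by
    rintro ⟨a, b, c⟩ h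
    exact mem_cliqueFinset_iff.2 (is3Clique_triple_iff.2 (mem_orderedTriangles.1 h))
  have fiber : ∀ s ∈ G.cliqueFinset 3,
      #{t ∈ orderedTriangles G | {t.1, t.2.1, t.2.2} = s} = 6 := by
    intro s hs
    obtain ⟨hclique, hcard⟩ := mem_cliqueFinset_iff.1 hs
    convert card_filter_pairwise_ne_triple s using 2
    · ext ⟨a, b, c⟩
      simp only [mem_filter, mem_orderedTriangles, mem_product]
      constructor
      · rintro ⟨⟨hab, hac, hbc⟩, rfl⟩
        simp [hab.ne, hac.ne, hbc.ne]
      · rintro ⟨⟨ha, hb, hc⟩, hab, hac, hbc⟩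
        refine ⟨⟨hclique ha hb hab, hclique ha hc hac, hclique hb hc hbc⟩, ?_⟩
        refine eq_of_subset_of_card_le (by simp [insert_subset_iff, ha, hb, hc]) ?_
        rw [hcard, card_eq_three.2 ⟨a, b, c, hab, hac, hbc, rfl⟩]
    · rw [hcard]
  rw [card_eq_sum_card_fiberwise hmaps, sum_congr rfl fiber, sum_const, smul_eq_mul, mul_comm]

lemma six_mul_tripleCount_three : 6 * tripleCount G 3 = #(orderedTriangles G) := by
  rw [card_orderedTriangles, tripleCount_three_eq_card_cliqueFinset]

lemma card_filter_triple_aaa :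
    #{u : V × V × V | u.1 = u.2.1 ∧ u.1 = u.2.2} = Fintype.card V := by
  rw [← card_univ]
  refine card_nbij' (·.1) (fun a => (a, a, a)) ?_ ?_ ?_ ?_ <;> intro u hu <;> aesop

lemma card_filter_triple_aac_adj :
    #{u : V × V × V | u.1 = u.2.1 ∧ G.Adj u.1 u.2.2} = #(adjPairs G) := by
  refine card_nbij' (fun u => (u.1, u.2.2)) (fun p => (p.1, p.1, p.2)) ?_ ?_ ?_ ?_ <;>
    intro u hu <;> aesop

lemma card_filter_triple_aba_adj :
    #{u : V × V × V | u.1 = u.2.2 ∧ G.Adj u.1 u.2.1} = #(adjPairs G) := by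
  refine card_nbij' (fun u => (u.1, u.2.1)) (fun p => (p.1, p.2, p.1)) ?_ ?_ ?_ ?_ <;>
    intro u hu <;> aesop

lemma card_filter_triple_abb_adj :
    #{u : V × V × V | u.2.1 = u.2.2 ∧ G.Adj u.1 u.2.1} = #(adjPairs G) := by
  refine card_nbij' (fun u => (u.1, u.2.1)) (fun p => (p.1, p.2, p.2)) ?_ ?_ ?_ ?_ <;>
    intro u hu <;> aesop

lemma card_filter_triple_adj_fst_snd :
    #{v : V × V × V | G.Adj v.1 v.2.1} = #(adjPairs G) * Fintype.card V := by
  rw [← card_univ, ← card_product]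
  exact card_equiv (Equiv.prodAssoc V V V).symm (by simp)

lemma card_filter_triple_adj_fst_thd :
    #{v : V × V × V | G.Adj v.1 v.2.2} = #(adjPairs G) * Fintype.card V := by
  rw [← card_univ, ← card_product]
  exact card_equiv ((Equiv.prodCongr (Equiv.refl V) (Equiv.prodComm V V)).trans
    (Equiv.prodAssoc V V V).symm) (by simp)

lemma card_filter_triple_adj_snd_thd :
    #{v : V × V × V | G.Adj v.2.1 v.2.2} = #(adjPairs G) * Fintype.card V := by
  rw [← card_univ, ← card_product]
  exact card_equiv (Equiv.prodComm V (V × V)) (by simp)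

end Counting

section Inflate

variable {α β : Type*} (G : SimpleGraph α) (H : SimpleGraph β)

lemma inflate_adj {p q : α × β} :
    (inflate G H).Adj p q ↔ G.Adj p.1 q.1 ∨ p.1 = q.1 ∧ H.Adj p.2 q.2 := Iff.rfl

variable [Fintype α] [Fintype β]

lemma mem_orderedTriangles_inflate {a b c : α} {x y z : β} :
    ((a, x), (b, y), (c, z)) ∈ orderedTriangles (inflate G H) ↔
      (a = b ∧ a = c) ∧ (x, y, z) ∈ orderedTriangles H ∨
      (a = b ∧ G.Adj a c) ∧ H.Adj x y ∨
      (a = c ∧ G.Adj a b) ∧ H.Adj x z ∨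
      (b = c ∧ G.Adj a b) ∧ H.Adj y z ∨
      (a, b, c) ∈ orderedTriangles G := by
  simp only [mem_orderedTriangles, inflate_adj]
  by_cases hab : a = b <;> by_cases hac : a = c <;> by_cases hbc : b = c <;>
    subst_vars <;> simp_all [G.adj_comm, and_comm]

lemma card_orderedTriangles_inflate :
    #(orderedTriangles (inflate G H)) =
      Fintype.card α * #(orderedTriangles H) +
        3 * (#(adjPairs G) * (#(adjPairs H) * Fintype.card β)) +
        #(orderedTriangles G) * Fintype.card β ^ 3 := by
  set D : Finset (α × α × α) := {u | u.1 = u.2.1 ∧ u.1 = u.2.2}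
  set P₁ : Finset (α × α × α) := {u | u.1 = u.2.1 ∧ G.Adj u.1 u.2.2}
  set P₂ : Finset (α × α × α) := {u | u.1 = u.2.2 ∧ G.Adj u.1 u.2.1}
  set P₃ : Finset (α × α × α) := {u | u.2.1 = u.2.2 ∧ G.Adj u.1 u.2.1}
  set Q₁ : Finset (β × β × β) := {v | H.Adj v.1 v.2.1}
  set Q₂ : Finset (β × β × β) := {v | H.Adj v.1 v.2.2}
  set Q₃ : Finset (β × β × β) := {v | H.Adj v.2.1 v.2.2}
  have hsplit : #(orderedTriangles (inflate G H)) =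
      #(D ×ˢ orderedTriangles H ∪ P₁ ×ˢ Q₁ ∪ P₂ ×ˢ Q₂ ∪ P₃ ×ˢ Q₃ ∪
        orderedTriangles G ×ˢ univ) := by
    refine card_equiv ((Equiv.prodCongr (Equiv.refl _) (Equiv.prodProdProdComm α β α β)).trans
      (Equiv.prodProdProdComm α β (α × α) (β × β))) ?_
    rintro ⟨⟨a, x⟩, ⟨b, y⟩, ⟨c, z⟩⟩
    rw [mem_orderedTriangles_inflate]
    simp [D, P₁, P₂, P₃, Q₁, Q₂, Q₃]
  rw [hsplit, card_union_of_disjoint, card_union_of_disjoint, card_union_of_disjoint,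
    card_union_of_disjoint]
  · simp only [card_product, card_univ, Fintype.card_prod, D, P₁, P₂, P₃, Q₁, Q₂, Q₃,
      card_filter_triple_aaa, card_filter_triple_aac_adj, card_filter_triple_aba_adj,
      card_filter_triple_abb_adj, card_filter_triple_adj_fst_snd,
      card_filter_triple_adj_fst_thd, card_filter_triple_adj_snd_thd]
    ring
  -- the five patterns are already disjoint on the first coordinates
  all_goals
    simp only [disjoint_union_left, disjoint_product]
    repeat' apply And.intro
  all_goals
    refine .inl (disjoint_left.2 ?_)
    rintro ⟨a, b, c⟩ h₁ h₂
    simp only [D, P₁, P₂, P₃, mem_filter, mem_univ, true_and, mem_orderedTriangles] at h₁ h₂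
    grind [SimpleGraph.Adj.ne]

end Inflate

/-- The number of triangles in `inflate G H` is
`|G|·T(H) + 2·e(G)·e(H)·|H| + T(G)·|H|³`. -/
theorem stmt11 {α β : Type*} [Fintype α] [Fintype β]
    (G : SimpleGraph α) (H : SimpleGraph β) :
    tripleCount (inflate G H) 3 =
      Fintype.card α * tripleCount H 3 +
        2 * edgeCount G * edgeCount H * Fintype.card β +
        tripleCount G 3 * (Fintype.card β) ^ 3 := by
  apply Nat.eq_of_mul_eq_mul_left (show 0 < 6 by norm_num)
  rw [six_mul_tripleCount_three, card_orderedTriangles_inflate, ← six_mul_tripleCount_three,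
    ← six_mul_tripleCount_three, card_adjPairs, card_adjPairs]
  ring
end

section
/- If G and H are almost-3-symmetric finite simple graphs, then inflate(G,H) is almost-3-symmetric. -/
open scoped Classical

/-- `X` is almost-3-symmetric: it is 2-symmetric, its triangle count equals its
empty-triple count, and its induced-`P₃` count equals its one-edge-triple count. -/
def Almost3Sym {V : Type*} [Fintype V] (X : SimpleGraph V) : Prop :=
  2 * edgeCount X = (Fintype.card V).choose 2 ∧
  tripleCount X 3 = tripleCount X 0 ∧
  tripleCount X 2 = tripleCount X 1

/-! Let `A` and `B` be the adjacency matrices of a graph and of its complement. Over ordered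
triples of distinct vertices, triangles are counted by `tr A³` (six times each) and induced
paths on three vertices by `tr A²B` (twice each), so almost-3-symmetry amounts to
`e = e(complement)`, `tr A³ = tr B³` and `tr A²B = tr B²A`. The complement of `inflate G H`
is `inflate Gᶜ Hᶜ`, and the adjacency matrix of `inflate G H` is `A_G ⊗ J + I ⊗ A_H`. In the
trace of a product of three such matrices the terms with a single factor `A_G` vanish, since
`tr A_G = 0`, and the rest involve only `tr A_G A_G' A_G''`, `tr A_H A_H' A_H''`,
`tr A_G A_G' ∈ {2e(G), 0}` and `e(H)`: each of these is the same for `(G, H)` and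
`(Gᶜ, Hᶜ)`. -/

open Finset Matrix SimpleGraph
open scoped Kronecker

theorem Matrix.trace_mul_mul_eq_sum {R n : Type*} [Fintype n] [NonUnitalNonAssocSemiring R]
    (A B C : Matrix n n R) : trace (A * B * C) = ∑ x, ∑ y, ∑ z, A x y * B y z * C z x := by
  simp only [trace, diag_apply, mul_apply, sum_mul]
  exact sum_congr rfl fun x _ => sum_comm

section Kronecker
variable {R α β : Type*} [CommSemiring R] [Fintype α] [Fintype β]

theorem Matrix.sum_kronecker (A : Matrix α α R) (B : Matrix β β R) :
    ∑ p : α × β, ∑ q : α × β, (A ⊗ₖ B) p q = (∑ i, ∑ j, A i j) * ∑ k, ∑ l, B k l := by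
  simp only [Fintype.sum_prod_type, kronecker_apply, sum_mul_sum]

theorem Matrix.trace_allOnes_mul_allOnes_mul (Q : Matrix β β R) :
    trace (of (fun _ _ => 1) * of (fun _ _ => 1) * Q) = Fintype.card β * ∑ i, ∑ j, Q i j := by
  simp only [trace, diag_apply, mul_apply, of_apply, mul_one, sum_const, card_univ, nsmul_eq_mul,
    Finset.mul_sum]
  exact sum_comm

theorem Matrix.trace_kronecker_allOnes_add_mul_mul {P₁ P₂ P₃ : Matrix α α R} (h₁ : trace P₁ = 0)
    (h₂ : trace P₂ = 0) (h₃ : trace P₃ = 0) (Q₁ Q₂ Q₃ : Matrix β β R) :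
    trace ((P₁ ⊗ₖ of (fun _ _ => 1) + 1 ⊗ₖ Q₁) * (P₂ ⊗ₖ of (fun _ _ => 1) + 1 ⊗ₖ Q₂) *
        (P₃ ⊗ₖ of (fun _ _ => 1) + 1 ⊗ₖ Q₃)) =
      Fintype.card β ^ 3 * trace (P₁ * P₂ * P₃) + Fintype.card α * trace (Q₁ * Q₂ * Q₃) +
        Fintype.card β * (trace (P₁ * P₂) * ∑ i, ∑ j, Q₃ i j +
          trace (P₂ * P₃) * ∑ i, ∑ j, Q₁ i j + trace (P₃ * P₁) * ∑ i, ∑ j, Q₂ i j) := by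
  simp only [add_mul, mul_add, ← mul_kronecker_mul, one_mul, mul_one, trace_add, trace_kronecker,
    trace_one, h₁, h₂, h₃]
  set J : Matrix β β R := of fun _ _ => 1
  rw [trace_mul_cycle Q₁ J J, trace_mul_cycle J Q₁ J, trace_mul_cycle J Q₂ J, trace_mul_comm P₁ P₃,
    trace_allOnes_mul_allOnes_mul, trace_allOnes_mul_allOnes_mul, trace_allOnes_mul_allOnes_mul,
    trace_allOnes_mul_allOnes_mul]
  simp only [J, of_apply, sum_const, card_univ, nsmul_eq_mul, mul_one]
  ring

end Kronecker

section AdjMatrix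
variable {V : Type*} [Fintype V]

theorem edgeCount_eq_card_edgeFinset (X : SimpleGraph V) : edgeCount X = #X.edgeFinset := by
  rw [edgeCount, Nat.card_eq_fintype_card, edgeFinset_card]

theorem IsCompl.edgeCount_add_edgeCount {X Y : SimpleGraph V} (h : IsCompl X Y) :
    edgeCount X + edgeCount Y = (Fintype.card V).choose 2 := by
  rw [edgeCount, edgeCount, Nat.card_coe_set_eq, Nat.card_coe_set_eq,
    ← Set.ncard_union_eq (disjoint_edgeSet.2 h.disjoint), ← edgeSet_sup, h.sup_eq_top,
    ← coe_edgeFinset, Set.ncard_coe_finset]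
  convert card_edgeFinset_top_eq_card_choose_two (V := V)

theorem sum_adjMatrix (X : SimpleGraph V) : ∑ x, ∑ y, X.adjMatrix ℕ x y = 2 * edgeCount X := by
  rw [edgeCount_eq_card_edgeFinset, ← sum_degrees_eq_twice_card_edges]
  refine sum_congr rfl fun x _ => ?_
  simp [adjMatrix_apply, ← card_neighborFinset_eq_degree, neighborFinset_eq_filter]

theorem trace_adjMatrix_mul_self (X : SimpleGraph V) :
    trace (X.adjMatrix ℕ * X.adjMatrix ℕ) = 2 * edgeCount X := by
  simp only [trace, diag_apply, adjMatrix_mul_self_apply_self, Nat.cast_id,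
    sum_degrees_eq_twice_card_edges, edgeCount_eq_card_edgeFinset]

theorem trace_adjMatrix_mul_adjMatrix_of_disjoint {X Y : SimpleGraph V} (h : Disjoint X Y) :
    trace (X.adjMatrix ℕ * Y.adjMatrix ℕ) = 0 := by
  simpa [trace, mul_apply, adjMatrix_apply, Y.adj_comm] using disjoint_left.1 h.symm

omit [Fintype V] in
theorem IsCompl.adj_iff {X Y : SimpleGraph V} (h : IsCompl X Y) {x y : V} :
    Y.Adj x y ↔ x ≠ y ∧ ¬X.Adj x y := by
  rw [← h.compl_eq, compl_adj]

omit [Fintype V] in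
theorem IsCompl.adjMatrix_apply_add {X Y : SimpleGraph V} (h : IsCompl X Y) {x y : V}
    (hxy : x ≠ y) : Y.adjMatrix ℕ x y + X.adjMatrix ℕ x y = 1 := by
  by_cases hadj : X.Adj x y <;> simp [adjMatrix_apply, h.adj_iff, hxy, hadj]

end AdjMatrix

section TripleCount
variable {V : Type*} [Fintype V]

omit [Fintype V] in
theorem card_distinct_triples_of_card_eq_three {s : Finset V} (hs : #s = 3) :
    #{t ∈ s ×ˢ s ×ˢ s | t.1 ≠ t.2.1 ∧ t.1 ≠ t.2.2 ∧ t.2.1 ≠ t.2.2} = 6 := by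
  obtain ⟨x, y, z, hxy, hxz, hyz, rfl⟩ := card_eq_three.1 hs
  have hx : x ∉ ({y, z} : Finset V) := by simp [hxy, hxz]
  have hy : y ∉ ({z} : Finset V) := by simp [hyz]
  simp only [card_filter, sum_product, sum_insert hx, sum_insert hy, sum_singleton]
  simp [hxy, hxz, hyz, hxy.symm, hxz.symm, hyz.symm]

theorem sum_distinct_triples_eq_six_mul (F : Finset V → ℕ) :
    ∑ x, ∑ y, ∑ z, (if x ≠ y ∧ x ≠ z ∧ y ≠ z then F {x, y, z} else 0) =
      6 * ∑ s ∈ powersetCard 3 univ, F s := by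
  set D : Finset (V × V × V) := {t | t.1 ≠ t.2.1 ∧ t.1 ≠ t.2.2 ∧ t.2.1 ≠ t.2.2}
  set img : V × V × V → Finset V := fun t => {t.1, t.2.1, t.2.2}
  have hmaps : ∀ t ∈ D, img t ∈ powersetCard 3 univ := by
    rintro ⟨x, y, z⟩ ht
    obtain ⟨hxy, hxz, hyz⟩ := (mem_filter.1 ht).2
    exact mem_powersetCard_univ.2 (card_eq_three.2 ⟨x, y, z, hxy, hxz, hyz, rfl⟩)
  have hfiber : ∀ s ∈ powersetCard 3 univ,
      {t ∈ D | img t = s} = {t ∈ s ×ˢ s ×ˢ s | t.1 ≠ t.2.1 ∧ t.1 ≠ t.2.2 ∧ t.2.1 ≠ t.2.2} := by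
    intro s hs
    ext ⟨x, y, z⟩
    simp only [D, img, mem_filter, mem_univ, true_and, mem_product]
    constructor
    · rintro ⟨hd, rfl⟩
      simp [hd]
    · rintro ⟨⟨hx, hy, hz⟩, hd⟩
      refine ⟨hd, eq_of_subset_of_card_le ?_ ?_⟩
      · simp [insert_subset_iff, hx, hy, hz]
      · rw [(mem_powersetCard_univ.1 hs), card_eq_three.2 ⟨x, y, z, hd.1, hd.2.1, hd.2.2, rfl⟩]
  calc ∑ x, ∑ y, ∑ z, (if x ≠ y ∧ x ≠ z ∧ y ≠ z then F {x, y, z} else 0)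
      = ∑ t ∈ D, F (img t) := by
        rw [sum_filter]; simp only [Fintype.sum_prod_type]; rfl
    _ = ∑ s ∈ powersetCard 3 univ, ∑ t ∈ D with img t = s, F (img t) :=
        (sum_fiberwise_of_maps_to hmaps _).symm
    _ = ∑ s ∈ powersetCard 3 univ, 6 * F s := by
        refine sum_congr rfl fun s hs => ?_
        rw [sum_congr rfl fun t ht => congrArg F (mem_filter.1 ht).2, sum_const, hfiber s hs,
          card_distinct_triples_of_card_eq_three (mem_powersetCard_univ.1 hs), smul_eq_mul]
    _ = 6 * ∑ s ∈ powersetCard 3 univ, F s := (mul_sum _ _ _).symm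

theorem edgePairsIn_eq_sum (X : SimpleGraph V) (s : Finset V) :
    edgePairsIn X s = ∑ x ∈ s, ∑ y ∈ s, X.adjMatrix ℕ x y := by
  simp only [edgePairsIn, card_filter, sum_product, adjMatrix_apply]

theorem edgePairsIn_triple (X : SimpleGraph V) {x y z : V} (hxy : x ≠ y) (hxz : x ≠ z)
    (hyz : y ≠ z) :
    edgePairsIn X {x, y, z} = 2 * (X.adjMatrix ℕ x y + X.adjMatrix ℕ x z + X.adjMatrix ℕ y z) := by
  have hx : x ∉ ({y, z} : Finset V) := by simp [hxy, hxz]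
  have hy : y ∉ ({z} : Finset V) := by simp [hyz]
  simp only [edgePairsIn_eq_sum, sum_insert hx, sum_insert hy, sum_singleton, adjMatrix_apply,
    X.adj_comm y x, X.adj_comm z x, X.adj_comm z y, X.irrefl, if_false]
  ring

theorem six_mul_tripleCount (X : SimpleGraph V) (j : ℕ) :
    6 * tripleCount X j = ∑ x, ∑ y, ∑ z,
      if (x ≠ y ∧ x ≠ z ∧ y ≠ z) ∧
        X.adjMatrix ℕ x y + X.adjMatrix ℕ x z + X.adjMatrix ℕ y z = j then 1 else 0 := by
  rw [tripleCount, card_filter, ← sum_distinct_triples_eq_six_mul]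
  refine sum_congr rfl fun x _ => sum_congr rfl fun y _ => sum_congr rfl fun z _ => ?_
  by_cases h : x ≠ y ∧ x ≠ z ∧ y ≠ z
  · obtain ⟨hxy, hxz, hyz⟩ := h
    simp [hxy, hxz, hyz, edgePairsIn_triple X hxy hxz hyz]
  · simp only [h, false_and, if_false]

theorem IsCompl.tripleCount_eq {X Y : SimpleGraph V} (h : IsCompl X Y) {j : ℕ} (hj : j ≤ 3) :
    tripleCount Y j = tripleCount X (3 - j) := by
  refine Nat.eq_of_mul_eq_mul_left (show 0 < 6 by norm_num) ?_
  rw [six_mul_tripleCount, six_mul_tripleCount]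
  refine sum_congr rfl fun x _ => sum_congr rfl fun y _ => sum_congr rfl fun z _ => ?_
  by_cases hd : x ≠ y ∧ x ≠ z ∧ y ≠ z
  · obtain ⟨hxy, hxz, hyz⟩ := hd
    have := h.adjMatrix_apply_add hxy
    have := h.adjMatrix_apply_add hxz
    have := h.adjMatrix_apply_add hyz
    simp only [hxy, hxz, hyz, ne_eq, not_false_eq_true, and_self, true_and]
    exact if_congr (by omega) rfl rfl
  · simp only [hd, false_and, if_false]

theorem six_mul_tripleCount_three_s16 (X : SimpleGraph V) :
    6 * tripleCount X 3 = trace (X.adjMatrix ℕ * X.adjMatrix ℕ * X.adjMatrix ℕ) := by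
  rw [six_mul_tripleCount, trace_mul_mul_eq_sum]
  refine sum_congr rfl fun x _ => sum_congr rfl fun y _ => sum_congr rfl fun z _ => ?_
  by_cases hd : x ≠ y ∧ x ≠ z ∧ y ≠ z
  · obtain ⟨hxy, hxz, hyz⟩ := hd
    by_cases a : X.Adj x y <;> by_cases b : X.Adj x z <;> by_cases c : X.Adj y z <;>
      simp [adjMatrix_apply, hxy, hxz, hyz, a, b, c, X.adj_comm z x]
  · simp only [not_and_or, not_not] at hd
    rcases hd with rfl | rfl | rfl <;> simp [adjMatrix_apply]

theorem IsCompl.two_mul_tripleCount_two {X Y : SimpleGraph V} (h : IsCompl X Y) :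
    2 * tripleCount X 2 = trace (X.adjMatrix ℕ * X.adjMatrix ℕ * Y.adjMatrix ℕ) := by
  set A := X.adjMatrix ℕ
  set B := Y.adjMatrix ℕ
  have hsum : 6 * tripleCount X 2 = trace (A * A * B) + trace (A * B * A) + trace (B * A * A) := by
    simp only [six_mul_tripleCount, trace_mul_mul_eq_sum, ← sum_add_distrib]
    refine sum_congr rfl fun x _ => sum_congr rfl fun y _ => sum_congr rfl fun z _ => ?_
    by_cases hd : x ≠ y ∧ x ≠ z ∧ y ≠ z
    · obtain ⟨hxy, hxz, hyz⟩ := hd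
      by_cases a : X.Adj x y <;> by_cases b : X.Adj x z <;> by_cases c : X.Adj y z <;>
        simp [A, B, adjMatrix_apply, h.adj_iff, hxy, hxz, hyz, hxz.symm, a, b, c, X.adj_comm z x]
    · simp only [not_and_or, not_not] at hd
      rcases hd with rfl | rfl | rfl <;> simp [A, B, adjMatrix_apply]
  rw [trace_mul_cycle B A A, trace_mul_cycle A B A] at hsum
  omega

theorem IsCompl.almost3Sym_iff {X Y : SimpleGraph V} (h : IsCompl X Y) :
    Almost3Sym X ↔ edgeCount X = edgeCount Y ∧
      trace (X.adjMatrix ℕ * X.adjMatrix ℕ * X.adjMatrix ℕ) =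
        trace (Y.adjMatrix ℕ * Y.adjMatrix ℕ * Y.adjMatrix ℕ) ∧
      trace (X.adjMatrix ℕ * X.adjMatrix ℕ * Y.adjMatrix ℕ) =
        trace (Y.adjMatrix ℕ * Y.adjMatrix ℕ * X.adjMatrix ℕ) := by
  have h₀ : tripleCount Y 3 = tripleCount X 0 := h.tripleCount_eq le_rfl
  have h₁ : tripleCount Y 2 = tripleCount X 1 := h.tripleCount_eq (by norm_num)
  rw [Almost3Sym, ← six_mul_tripleCount_three_s16, ← six_mul_tripleCount_three_s16,
    ← h.two_mul_tripleCount_two, ← h.symm.two_mul_tripleCount_two, h₀, h₁]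
  have := h.edgeCount_add_edgeCount
  constructor <;> rintro ⟨he, ht, hp⟩ <;> exact ⟨by omega, by omega, by omega⟩

end TripleCount

section Inflate
variable {α β : Type*}

theorem compl_inflate (G : SimpleGraph α) (H : SimpleGraph β) :
    (inflate G H)ᶜ = inflate Gᶜ Hᶜ := by
  ext ⟨g, h⟩ ⟨g', h'⟩
  simp only [compl_adj, inflate, ne_eq, Prod.mk.injEq]
  by_cases hg : g = g' <;> simp [hg]

theorem IsCompl.inflate {G G' : SimpleGraph α} {H H' : SimpleGraph β} (hG : IsCompl G G')
    (hH : IsCompl H H') : IsCompl (inflate G H) (inflate G' H') := by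
  rw [← hG.compl_eq, ← hH.compl_eq, ← compl_inflate]
  exact isCompl_compl

theorem adjMatrix_inflate (R : Type*) [NonAssocSemiring R] (G : SimpleGraph α)
    (H : SimpleGraph β) :
    (inflate G H).adjMatrix R = G.adjMatrix R ⊗ₖ of (fun _ _ => 1) + 1 ⊗ₖ H.adjMatrix R := by
  ext ⟨g, h⟩ ⟨g', h'⟩
  rw [adjMatrix_apply]
  by_cases hg : g = g'
  · subst hg; simp [inflate]
  · simp [inflate, hg]

variable [Fintype α] [Fintype β]

theorem edgeCount_inflate (G : SimpleGraph α) (H : SimpleGraph β) :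
    edgeCount (inflate G H) = Fintype.card β ^ 2 * edgeCount G + Fintype.card α * edgeCount H := by
  refine Nat.eq_of_mul_eq_mul_left two_pos ?_
  rw [← sum_adjMatrix, adjMatrix_inflate]
  simp only [Matrix.add_apply, sum_add_distrib, sum_kronecker, sum_adjMatrix]
  simp [one_apply]
  ring

theorem trace_adjMatrix_inflate_mul_mul (G₁ G₂ G₃ : SimpleGraph α) (H₁ H₂ H₃ : SimpleGraph β) :
    trace ((inflate G₁ H₁).adjMatrix ℕ * (inflate G₂ H₂).adjMatrix ℕ *
        (inflate G₃ H₃).adjMatrix ℕ) =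
      Fintype.card β ^ 3 * trace (G₁.adjMatrix ℕ * G₂.adjMatrix ℕ * G₃.adjMatrix ℕ) +
        Fintype.card α * trace (H₁.adjMatrix ℕ * H₂.adjMatrix ℕ * H₃.adjMatrix ℕ) +
        2 * Fintype.card β * (trace (G₁.adjMatrix ℕ * G₂.adjMatrix ℕ) * edgeCount H₃ +
          trace (G₂.adjMatrix ℕ * G₃.adjMatrix ℕ) * edgeCount H₁ +
          trace (G₃.adjMatrix ℕ * G₁.adjMatrix ℕ) * edgeCount H₂) := by
  simp only [adjMatrix_inflate]
  rw [trace_kronecker_allOnes_add_mul_mul (trace_adjMatrix _ _) (trace_adjMatrix _ _)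
    (trace_adjMatrix _ _), sum_adjMatrix, sum_adjMatrix, sum_adjMatrix]
  simp only [Nat.cast_id]
  ring

end Inflate

/-- The inflation of two almost-3-symmetric graphs is almost-3-symmetric. -/
theorem stmt16 {α β : Type*} [Fintype α] [Fintype β]
    (G : SimpleGraph α) (H : SimpleGraph β)
    (hG : Almost3Sym G) (hH : Almost3Sym H) : Almost3Sym (inflate G H) := by
  obtain ⟨eG, tG, pG⟩ := (isCompl_compl (x := G)).almost3Sym_iff.1 hG
  obtain ⟨eH, tH, pH⟩ := (isCompl_compl (x := H)).almost3Sym_iff.1 hH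
  have hdisj := (isCompl_compl (x := G)).disjoint
  refine ((isCompl_compl (x := G)).inflate isCompl_compl).almost3Sym_iff.2 ⟨?_, ?_, ?_⟩
  · rw [edgeCount_inflate, edgeCount_inflate, eG, eH]
  · simp only [trace_adjMatrix_inflate_mul_mul, trace_adjMatrix_mul_self, tG, tH, eG, eH]
  · simp only [trace_adjMatrix_inflate_mul_mul, trace_adjMatrix_mul_self, pG, pH, eG, eH,
      trace_adjMatrix_mul_adjMatrix_of_disjoint hdisj,
      trace_adjMatrix_mul_adjMatrix_of_disjoint hdisj.symm]
end
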